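/- arXiv:2405.12555 — 4 statements merged into one kernel-verified Lean document; each statement's English description precedes it below -/
import Mathlib

section
/- Assume ∑_{i=1}^n α_{ik} is even for every k ∈ {1,...,q} (otherwise the Product Partition Problem is infeasible). Then there exists a subset C ⊆ {1,...,n} with ∏_{i∈C} s_i = ∏_{i∉C} s_i if and only if there exists x ∈ {0,1}^n such that x^T · Ŝ = T̂, i.e., ∑_{i=1}^n x_i · ŝ_i = T̂. -/
/-!
A subset `C` solves the Product Partition Problem iff, for every prime `p k`, the exponents of
`p k` over `C` add up to half of its total exponent. Since every `s i ≤ 2 ^ m` has at most `m`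
prime factors, all these exponent vectors have digit sum at most `B = n * m`, and on such vectors
the weighted base-`B` encoding `c ↦ ∑ k, c k * (k + 1) * B ^ k` is injective: the lower digits
contribute at most `q * B ^ q`, less than the weight `(q + 1) * B ^ q` of the top digit.
-/

open Finset

def weightedBaseSum (B : ℕ) {q : ℕ} (c : Fin q → ℕ) : ℕ :=
  ∑ k : Fin q, c k * ((k : ℕ) + 1) * B ^ (k : ℕ)

theorem weightedBaseSum_succ (B : ℕ) {q : ℕ} (c : Fin (q + 1) → ℕ) :
    weightedBaseSum B c = weightedBaseSum B (Fin.init c) + c (Fin.last q) * ((q + 1) * B ^ q) := by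
  simp only [weightedBaseSum, Fin.sum_univ_castSucc, Fin.val_castSucc, Fin.val_last, Fin.init,
    mul_assoc]

theorem weightedBaseSum_le {B : ℕ} (hB : 0 < B) {q : ℕ} {c : Fin q → ℕ} (hc : ∑ k, c k ≤ B) :
    weightedBaseSum B c ≤ q * B ^ q := by
  calc weightedBaseSum B c ≤ ∑ k, c k * (q * B ^ (q - 1)) := by
        refine sum_le_sum fun k _ => ?_
        rw [mul_assoc]
        gcongr <;> omega
    _ = (∑ k, c k) * (q * B ^ (q - 1)) := (sum_mul ..).symm
    _ ≤ B * (q * B ^ (q - 1)) := Nat.mul_le_mul_right _ hc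
    _ = q * B ^ q := by
        rcases q with _ | q
        · simp
        · rw [Nat.add_sub_cancel, pow_succ]; ring

theorem Fin.sum_init_le {q : ℕ} (c : Fin (q + 1) → ℕ) : ∑ k, Fin.init c k ≤ ∑ k, c k := by
  rw [Fin.sum_univ_castSucc c]
  exact Nat.le_add_right _ _

theorem weightedBaseSum_injective_of_pos {B : ℕ} (hB : 0 < B) :
    ∀ {q : ℕ} {a b : Fin q → ℕ}, ∑ k, a k ≤ B → ∑ k, b k ≤ B →
      weightedBaseSum B a = weightedBaseSum B b → a = b := by
  intro q
  induction q with
  | zero => intro a b _ _ _; exact Subsingleton.elim a b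
  | succ q ih =>
    intro a b ha hb h
    have hW : 0 < (q + 1) * B ^ q := by positivity
    have digits (c : Fin (q + 1) → ℕ) (hc : ∑ k, c k ≤ B) :
        weightedBaseSum B c / ((q + 1) * B ^ q) = c (Fin.last q) ∧
          weightedBaseSum B c % ((q + 1) * B ^ q) = weightedBaseSum B (Fin.init c) := by
      refine (Nat.div_mod_unique hW).2 ⟨by rw [weightedBaseSum_succ]; ring, ?_⟩
      calc weightedBaseSum B (Fin.init c) ≤ q * B ^ q :=
            weightedBaseSum_le hB ((Fin.sum_init_le c).trans hc)
        _ < (q + 1) * B ^ q := by gcongr; omega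
    obtain ⟨hlast_a, hinit_a⟩ := digits a ha
    obtain ⟨hlast_b, hinit_b⟩ := digits b hb
    have hinit : Fin.init a = Fin.init b :=
      ih ((Fin.sum_init_le a).trans ha) ((Fin.sum_init_le b).trans hb)
        (by rw [← hinit_a, ← hinit_b, h])
    rw [← Fin.snoc_init_self a, ← Fin.snoc_init_self b, hinit, ← hlast_a, ← hlast_b, h]

theorem weightedBaseSum_inj {B q : ℕ} {a b : Fin q → ℕ} (ha : ∑ k, a k ≤ B) (hb : ∑ k, b k ≤ B) :
    weightedBaseSum B a = weightedBaseSum B b ↔ a = b := by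
  refine ⟨fun h => ?_, congrArg _⟩
  rcases B.eq_zero_or_pos with rfl | hB
  · have eq_zero (c : Fin q → ℕ) (hc : ∑ k, c k ≤ 0) : c = 0 :=
      funext fun k => sum_eq_zero_iff.1 (Nat.le_zero.1 hc) k (mem_univ k)
    rw [eq_zero a ha, eq_zero b hb]
  · exact weightedBaseSum_injective_of_pos hB ha hb h

theorem sum_weightedBaseSum {ι : Type*} (B : ℕ) {q : ℕ} (C : Finset ι) (α : ι → Fin q → ℕ) :
    ∑ i ∈ C, weightedBaseSum B (α i) = weightedBaseSum B fun k => ∑ i ∈ C, α i k := by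
  simp only [weightedBaseSum, sum_mul]
  exact sum_comm

theorem Nat.factorization_prod_pow_apply {ι : Type*} [Fintype ι] {p : ι → ℕ}
    (hp : ∀ k, (p k).Prime) (hinj : Function.Injective p) (e : ι → ℕ) (j : ι) :
    (∏ k, p k ^ e k).factorization (p j) = e j := by
  rw [Nat.factorization_prod fun k _ => pow_ne_zero _ (hp k).ne_zero, Finset.sum_apply',
    sum_eq_single j]
  · rw [(hp j).factorization_pow, Finsupp.single_eq_same]
  · intro k _ hk
    rw [(hp k).factorization_pow, Finsupp.single_eq_of_ne' (hinj.ne hk)]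
  · exact fun hj => absurd (mem_univ j) hj

theorem prod_pow_injective {ι : Type*} [Fintype ι] {p : ι → ℕ} (hp : ∀ k, (p k).Prime)
    (hinj : Function.Injective p) : Function.Injective fun e : ι → ℕ => ∏ k, p k ^ e k :=
  fun e f h => funext fun j => by
    simpa only [Nat.factorization_prod_pow_apply hp hinj] using
      congrArg (fun t => t.factorization (p j)) h

theorem two_pow_sum_le_prod_pow {ι : Type*} [Fintype ι] {p : ι → ℕ} (hp : ∀ k, 2 ≤ p k)
    (e : ι → ℕ) : 2 ^ ∑ k, e k ≤ ∏ k, p k ^ e k := by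
  rw [← prod_pow_eq_pow_sum]
  exact prod_le_prod' fun k _ => Nat.pow_le_pow_left (hp k) _

theorem Finset.prod_prod_pow {ι κ M : Type*} [CommMonoid M] (C : Finset ι) (D : Finset κ)
    (p : κ → M) (α : ι → κ → ℕ) :
    ∏ i ∈ C, ∏ k ∈ D, p k ^ α i k = ∏ k ∈ D, p k ^ ∑ i ∈ C, α i k := by
  rw [prod_comm]
  exact prod_congr rfl fun k _ => prod_pow_eq_pow_sum ..

theorem Finset.sum_eq_sum_compl_iff_eq_half {ι : Type*} [Fintype ι] [DecidableEq ι]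
    {f : ι → ℕ} (hf : Even (∑ i, f i)) (C : Finset ι) :
    ∑ i ∈ C, f i = ∑ i ∈ Cᶜ, f i ↔ ∑ i ∈ C, f i = (∑ i, f i) / 2 := by
  obtain ⟨r, hr⟩ := hf
  have := sum_add_sum_compl C f
  omega

theorem exists_zero_one_sum_mul_iff {ι : Type*} [Fintype ι] (f : ι → ℕ) (t : ℕ) :
    (∃ x : ι → ℕ, (∀ i, x i = 0 ∨ x i = 1) ∧ ∑ i, x i * f i = t) ↔
      ∃ C : Finset ι, ∑ i ∈ C, f i = t := by
  classical
  constructor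
  · rintro ⟨x, hx, rfl⟩
    refine ⟨univ.filter (x · = 1), ?_⟩
    rw [sum_filter]
    refine sum_congr rfl fun i _ => ?_
    rcases hx i with h | h <;> simp [h]
  · rintro ⟨C, rfl⟩
    refine ⟨fun i => if i ∈ C then 1 else 0, fun i => by by_cases h : i ∈ C <;> simp [h], ?_⟩
    simp [ite_mul]

theorem stmt_9_general
    (n m q : ℕ)
    (s : Fin n → ℕ) (hsm : ∀ i, s i ≤ 2 ^ m)
    (p : Fin q → ℕ) (hp : ∀ k, (p k).Prime) (hmono : StrictMono p)
    (α : Fin n → Fin q → ℕ) (hα : ∀ i, s i = ∏ k, p k ^ α i k)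
    (heven : ∀ k : Fin q, Even (∑ i, α i k))
    (shat : Fin n → ℕ)
    (hshat : ∀ i, shat i = ∑ k : Fin q, α i k * ((k : ℕ) + 1) * (n * m) ^ (k : ℕ))
    (That : ℕ)
    (hThat : That = ∑ k : Fin q, ((∑ i, α i k) / 2) * ((k : ℕ) + 1) * (n * m) ^ (k : ℕ)) :
    (∃ C : Finset (Fin n), ∏ i ∈ C, s i = ∏ i ∈ Cᶜ, s i) ↔
      ∃ x : Fin n → ℕ, (∀ i, x i = 0 ∨ x i = 1) ∧ ∑ i, x i * shat i = That := by
  have hrow (i : Fin n) : ∑ k, α i k ≤ m :=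
    (Nat.pow_le_pow_iff_right one_lt_two).1 <|
      (two_pow_sum_le_prod_pow (fun k => (hp k).two_le) (α i)).trans (hα i ▸ hsm i)
  have htotal : ∑ k, ∑ i, α i k ≤ n * m := by
    rw [sum_comm]
    simpa [mul_comm] using sum_le_sum fun i (_ : i ∈ univ) => hrow i
  have hcol (C : Finset (Fin n)) : ∑ k, ∑ i ∈ C, α i k ≤ n * m :=
    (sum_le_sum fun k _ => sum_le_sum_of_subset (subset_univ C)).trans htotal
  have hhalf : ∑ k, (∑ i, α i k) / 2 ≤ n * m :=
    (sum_le_sum fun k _ => Nat.div_le_self _ _).trans htotal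
  have hshat' : shat = fun i => weightedBaseSum (n * m) (α i) := funext hshat
  rw [exists_zero_one_sum_mul_iff]
  refine exists_congr fun C => ?_
  calc (∏ i ∈ C, s i = ∏ i ∈ Cᶜ, s i)
      ↔ ∀ k, ∑ i ∈ C, α i k = ∑ i ∈ Cᶜ, α i k := by
        simp only [hα, prod_prod_pow, (prod_pow_injective hp hmono.injective).eq_iff, funext_iff]
    _ ↔ (fun k => ∑ i ∈ C, α i k) = fun k => (∑ i, α i k) / 2 := by
        simp only [funext_iff, sum_eq_sum_compl_iff_eq_half (heven _)]
    _ ↔ ∑ i ∈ C, shat i = That := by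
        rw [← weightedBaseSum_inj (hcol C) hhalf, hshat', sum_weightedBaseSum, hThat]
        rfl

/-- Assuming each column sum `∑ i, α i k` is even, the Product Partition Problem has a
solution iff there exists a binary vector `x ∈ {0,1}^n` with `∑ i, x i · ŝ i = T̂`,
where `ŝ i = ∑_{k=1}^q α i k · k · (n·m)^(k-1)` and
`T̂ = ∑_{k=1}^q T k · k · (n·m)^(k-1)` with `T k = (1/2) · ∑ i, α i k`. -/
theorem stmt_9
    (n m q : ℕ) (hn : 1 ≤ n) (hm : 1 ≤ m)
    (s : Fin n → ℕ) (hspos : ∀ i, 0 < s i) (hsm : ∀ i, s i ≤ 2 ^ m)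
    (p : Fin q → ℕ) (hp : ∀ k, (p k).Prime) (hmono : StrictMono p)
    (hdiv : ∀ r : ℕ, r.Prime → (r ∣ ∏ i, s i ↔ ∃ k, p k = r))
    (α : Fin n → Fin q → ℕ) (hα : ∀ i, s i = ∏ k, p k ^ α i k)
    (heven : ∀ k : Fin q, Even (∑ i, α i k))
    (shat : Fin n → ℕ)
    (hshat : ∀ i, shat i = ∑ k : Fin q, α i k * ((k : ℕ) + 1) * (n * m) ^ (k : ℕ))
    (That : ℕ)
    (hThat : That = ∑ k : Fin q, ((∑ i, α i k) / 2) * ((k : ℕ) + 1) * (n * m) ^ (k : ℕ)) :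
    (∃ C : Finset (Fin n), ∏ i ∈ C, s i = ∏ i ∈ Cᶜ, s i) ↔
      ∃ x : Fin n → ℕ, (∀ i, x i = 0 ∨ x i = 1) ∧ ∑ i, x i * shat i = That :=
  stmt_9_general n m q s hsm p hp hmono α hα heven shat hshat That hThat
end

section
/- Assume ∑_{i=1}^n α_{ik} is even for every k ∈ {1,...,q}. If x ∈ {0,1}^n satisfies ∑_{i=1}^n x_i · ŝ_i = T̂, then for every k ∈ {1,...,q} one has ∑_{i=1}^n x_i · α_{ik} = (1/2) · ∑_{i=1}^n α_{ik}; that is, x simultaneously solves the q intermediate Subset Sum Problems. -/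
private lemma geom_aux (B : ℕ) (hB : 2 ≤ B) (t : ℕ) (ht : 1 ≤ t) :
    ∑ j ∈ Finset.range t, B^j ≤ 2 * B^(t-1) := by
  induction t with
  | zero => omega
  | succ u ih =>
    rcases Nat.eq_or_lt_of_le ht with h | h
    · simp [← h]
    · have hu : 1 ≤ u := by omega
      rw [Finset.sum_range_succ]
      have h2 : 2 * B ^ (u - 1) ≤ B ^ u := by
        calc 2 * B ^ (u-1) ≤ B * B^(u-1) := Nat.mul_le_mul_right _ hB
        _ = B ^ u := by rw [← pow_succ']; congr 1; omega
      have := ih hu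
      simp only [Nat.succ_sub_one]
      omega

/-- Assuming each column sum `∑ i, α i k` is even: if the binary vector `x ∈ {0,1}^n`
satisfies `∑ i, x i · ŝ i = T̂`, then for every `k ∈ {1,...,q}` one has
`∑ i, x i · α i k = (1/2) · ∑ i, α i k`, i.e. `x` simultaneously solves the `q`
intermediate Subset Sum Problems. -/
theorem stmt_11
    (n m q : ℕ) (hn : 1 ≤ n) (hm : 1 ≤ m)
    (s : Fin n → ℕ) (hspos : ∀ i, 0 < s i) (hsm : ∀ i, s i ≤ 2 ^ m)
    (p : Fin q → ℕ) (hp : ∀ k, (p k).Prime) (hmono : StrictMono p)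
    (hdiv : ∀ r : ℕ, r.Prime → (r ∣ ∏ i, s i ↔ ∃ k, p k = r))
    (α : Fin n → Fin q → ℕ) (hα : ∀ i, s i = ∏ k, p k ^ α i k)
    (heven : ∀ k : Fin q, Even (∑ i, α i k))
    (shat : Fin n → ℕ)
    (hshat : ∀ i, shat i = ∑ k : Fin q, α i k * ((k : ℕ) + 1) * (n * m) ^ (k : ℕ))
    (That : ℕ)
    (hThat : That = ∑ k : Fin q, ((∑ i, α i k) / 2) * ((k : ℕ) + 1) * (n * m) ^ (k : ℕ))
    (x : Fin n → ℕ) (hx : ∀ i, x i = 0 ∨ x i = 1)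
    (hssp : ∑ i, x i * shat i = That) :
    ∀ k : Fin q, ∑ i, x i * α i k = (∑ i, α i k) / 2 := by
  classical
  set B : ℕ := n * m with hBdef
  set A : Fin q → ℕ := fun k => ∑ i, α i k with hAdef
  set D : Fin q → ℕ := fun k => ∑ i, x i * α i k with hDdef
  -- each exponent is at most m
  have hαm : ∀ i k, α i k ≤ m := by
    intro i k
    have h1 : p k ^ α i k ≤ s i := by
      rw [hα i]
      exact Finset.single_le_prod' (fun j _ => Nat.one_le_iff_ne_zero.mpr
        (pow_ne_zero _ (hp j).pos.ne')) (Finset.mem_univ k)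
    have h2 : 2 ^ α i k ≤ 2 ^ m :=
      le_trans (Nat.pow_le_pow_left (hp k).two_le _) (le_trans h1 (hsm i))
    exact (Nat.pow_le_pow_iff_right (by norm_num : 1 < 2)).mp h2
  have hAB : ∀ k, A k ≤ B := by
    intro k
    calc A k = ∑ i, α i k := rfl
    _ ≤ ∑ _i : Fin n, m := Finset.sum_le_sum (fun i _ => hαm i k)
    _ = n * m := by simp [Finset.sum_const, mul_comm]
  have hDA : ∀ k, D k ≤ A k := by
    intro k
    refine Finset.sum_le_sum (fun i _ => ?_)
    rcases hx i with h | h <;> simp [h]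
  -- the key summation identity
  have hkey : ∑ k : Fin q, D k * (((k:ℕ) + 1) * B ^ (k:ℕ))
      = ∑ k : Fin q, (A k / 2) * (((k:ℕ) + 1) * B ^ (k:ℕ)) := by
    have hL : ∑ i, x i * shat i
        = ∑ k : Fin q, D k * (((k:ℕ) + 1) * B ^ (k:ℕ)) := by
      calc ∑ i, x i * shat i
          = ∑ i, ∑ k : Fin q, (x i * α i k) * (((k:ℕ) + 1) * B ^ (k:ℕ)) := by
            refine Finset.sum_congr rfl (fun i _ => ?_)
            rw [hshat i, Finset.mul_sum]
            exact Finset.sum_congr rfl (fun k _ => by ring)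
        _ = ∑ k : Fin q, ∑ i, (x i * α i k) * (((k:ℕ) + 1) * B ^ (k:ℕ)) :=
            Finset.sum_comm
        _ = ∑ k : Fin q, D k * (((k:ℕ) + 1) * B ^ (k:ℕ)) := by
            refine Finset.sum_congr rfl (fun k _ => ?_)
            rw [hDdef, Finset.sum_mul]
    have hR : That = ∑ k : Fin q, (A k / 2) * (((k:ℕ) + 1) * B ^ (k:ℕ)) := by
      rw [hThat]
      exact Finset.sum_congr rfl (fun k _ => by rw [mul_assoc])
    rw [← hL, ← hR, hssp]
  -- doubled equation in ℕ
  have hNat : ∑ k : Fin q, (2 * D k) * (((k:ℕ) + 1) * B ^ (k:ℕ))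
      = ∑ k : Fin q, A k * (((k:ℕ) + 1) * B ^ (k:ℕ)) := by
    have h2 : ∀ k : Fin q, A k = 2 * (A k / 2) := by
      intro k
      obtain ⟨c, hc⟩ := heven k
      have : A k = c + c := hc
      omega
    calc ∑ k : Fin q, (2 * D k) * (((k:ℕ) + 1) * B ^ (k:ℕ))
        = 2 * ∑ k : Fin q, D k * (((k:ℕ) + 1) * B ^ (k:ℕ)) := by
          rw [Finset.mul_sum]; exact Finset.sum_congr rfl (fun k _ => by ring)
      _ = 2 * ∑ k : Fin q, (A k / 2) * (((k:ℕ) + 1) * B ^ (k:ℕ)) := by rw [hkey]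
      _ = ∑ k : Fin q, A k * (((k:ℕ) + 1) * B ^ (k:ℕ)) := by
          rw [Finset.mul_sum]
          refine Finset.sum_congr rfl (fun k _ => ?_)
          calc 2 * (A k / 2 * (((k:ℕ) + 1) * B ^ (k:ℕ)))
              = (2 * (A k / 2)) * (((k:ℕ) + 1) * B ^ (k:ℕ)) := by ring
            _ = A k * (((k:ℕ) + 1) * B ^ (k:ℕ)) := by rw [← h2 k]
  -- integer version
  set g : Fin q → ℤ := fun k => (2 * (D k : ℤ) - (A k : ℤ)) * (((k:ℕ) + 1) * (B:ℤ) ^ (k:ℕ))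
    with hgdef
  have hZ : ∑ k : Fin q, g k = 0 := by
    have : ∑ k : Fin q, (2 * (D k : ℤ)) * (((k:ℕ) + 1) * (B:ℤ) ^ (k:ℕ))
        = ∑ k : Fin q, (A k : ℤ) * (((k:ℕ) + 1) * (B:ℤ) ^ (k:ℕ)) := by
      exact_mod_cast hNat
    simp only [hgdef, sub_mul]
    rw [Finset.sum_sub_distrib, sub_eq_zero]
    exact this
  -- it suffices to prove the doubled statement
  suffices hmain : ∀ k : Fin q, 2 * D k = A k by
    intro k
    have h := hmain k
    simp only [hDdef, hAdef] at h
    omega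
  by_contra hcon
  push_neg at hcon
  obtain ⟨k₀, hk₀⟩ := hcon
  set S : Finset (Fin q) := Finset.univ.filter (fun k => 2 * D k ≠ A k) with hSdef
  have hSne : S.Nonempty := ⟨k₀, by simp [hSdef, hk₀]⟩
  set K : Fin q := S.max' hSne with hKdef
  have hKS : K ∈ S := S.max'_mem hSne
  have hDK : 2 * D K ≠ A K := by
    have := hKS; simp [hSdef] at this; exact this
  -- A K ≥ 2, hence B ≥ 2
  have hA2 : 2 ≤ A K := by
    obtain ⟨c, hc⟩ := heven K
    have hc' : A K = c + c := hc
    have := hDA K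
    omega
  have hB2 : 2 ≤ B := le_trans hA2 (hAB K)
  -- sum over S vanishes
  have hg0 : ∀ k ∈ Finset.univ, k ∉ S → g k = 0 := by
    intro k _ hk
    simp only [hSdef, Finset.mem_filter, Finset.mem_univ, true_and, not_not] at hk
    have h0 : 2 * (D k : ℤ) - (A k : ℤ) = 0 := by omega
    simp [hgdef, h0]
  have hSsum : ∑ k ∈ S, g k = 0 := by
    rw [Finset.sum_subset (Finset.subset_univ S) hg0]; exact hZ
  have hgK : g K = - ∑ k ∈ S.erase K, g k := by
    have := Finset.sum_erase_add S g hKS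
    rw [hSsum] at this
    linarith
  -- lower bound on |g K|
  have hpowpos : (0:ℤ) < (B:ℤ) ^ (K:ℕ) := pow_pos (by exact_mod_cast (by omega : 0 < B)) _
  have hlow : 2 * (((K:ℕ) : ℤ) + 1) * (B:ℤ) ^ (K:ℕ) ≤ |g K| := by
    have hdvd : (2:ℤ) ∣ (2 * (D K : ℤ) - (A K : ℤ)) := by
      obtain ⟨c, hc⟩ := heven K
      have hc' : (A K : ℤ) = 2 * c := by
        have : A K = c + c := hc
        push_cast [this]; ring
      rw [hc']
      exact dvd_sub (Dvd.intro _ rfl) (Dvd.intro _ rfl)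
    have hne : (2 * (D K : ℤ) - (A K : ℤ)) ≠ 0 := by
      intro h
      apply hDK
      have : (2 * (D K : ℤ)) = (A K : ℤ) := by linarith
      exact_mod_cast this
    have habs : (2:ℤ) ≤ |2 * (D K : ℤ) - (A K : ℤ)| :=
      Int.le_of_dvd (abs_pos.mpr hne) ((dvd_abs _ _).mpr hdvd)
    have hfac : (0:ℤ) ≤ (((K:ℕ) : ℤ) + 1) * (B:ℤ) ^ (K:ℕ) := by positivity
    calc 2 * (((K:ℕ) : ℤ) + 1) * (B:ℤ) ^ (K:ℕ)
        = 2 * ((((K:ℕ) : ℤ) + 1) * (B:ℤ) ^ (K:ℕ)) := by ring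
      _ ≤ |2 * (D K : ℤ) - (A K : ℤ)| * ((((K:ℕ) : ℤ) + 1) * (B:ℤ) ^ (K:ℕ)) :=
          mul_le_mul_of_nonneg_right habs hfac
      _ = |g K| := by
          rw [hgdef]
          rw [abs_mul, abs_of_nonneg hfac]
  -- bound each term in the erased sum
  have hterm : ∀ k ∈ S.erase K, |g k| ≤ (B : ℤ) * (K:ℕ) * (B:ℤ) ^ (k:ℕ) := by
    intro k hk
    obtain ⟨hne, hkS⟩ := Finset.mem_erase.mp hk
    have hkK : k < K := lt_of_le_of_ne (S.le_max' k hkS) hne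
    have hkv : (k:ℕ) + 1 ≤ (K:ℕ) := hkK
    have h1 : |2 * (D k : ℤ) - (A k : ℤ)| ≤ (A k : ℤ) := by
      have := hDA k
      rw [abs_le]
      constructor <;> omega
    have hfac : (0:ℤ) ≤ (((k:ℕ) : ℤ) + 1) * (B:ℤ) ^ (k:ℕ) := by positivity
    calc |g k| = |2 * (D k : ℤ) - (A k : ℤ)| * ((((k:ℕ) : ℤ) + 1) * (B:ℤ) ^ (k:ℕ)) := by
          rw [hgdef, abs_mul, abs_of_nonneg hfac]
      _ ≤ (A k : ℤ) * ((((k:ℕ) : ℤ) + 1) * (B:ℤ) ^ (k:ℕ)) :=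
          mul_le_mul_of_nonneg_right h1 hfac
      _ ≤ (B : ℤ) * (((K:ℕ) : ℤ) * (B:ℤ) ^ (k:ℕ)) := by
          have hAkB : (A k : ℤ) ≤ (B : ℤ) := by exact_mod_cast hAB k
          have hAk0 : (0:ℤ) ≤ (A k : ℤ) := by positivity
          have h2 : (((k:ℕ) : ℤ) + 1) ≤ ((K:ℕ) : ℤ) := by exact_mod_cast hkv
          have h3 : (0:ℤ) ≤ (B:ℤ) ^ (k:ℕ) := by positivity
          apply mul_le_mul hAkB (mul_le_mul_of_nonneg_right h2 h3) (by positivity)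
            (by positivity)
      _ = (B : ℤ) * (K:ℕ) * (B:ℤ) ^ (k:ℕ) := by ring
  -- case split on K.val
  rcases Nat.eq_zero_or_pos (K:ℕ) with hK0 | hK1
  · -- K.val = 0 : erased sum is empty
    have hempty : S.erase K = ∅ := by
      rw [Finset.eq_empty_iff_forall_notMem]
      intro k hk
      obtain ⟨hne, hkS⟩ := Finset.mem_erase.mp hk
      have hkK : k < K := lt_of_le_of_ne (S.le_max' k hkS) hne
      have : (k:ℕ) < (K:ℕ) := hkK
      omega
    rw [hempty, Finset.sum_empty, neg_zero] at hgK
    rw [hgK, abs_zero] at hlow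
    have : (0:ℤ) < 2 * (((K:ℕ) : ℤ) + 1) * (B:ℤ) ^ (K:ℕ) := by positivity
    linarith
  · -- K.val ≥ 1
    have hgeoZ : ∑ j ∈ Finset.range (K:ℕ), (B:ℤ)^j ≤ 2 * (B:ℤ)^((K:ℕ) - 1) := by
      exact_mod_cast geom_aux B hB2 (K:ℕ) hK1
    have himg : ∑ k ∈ S.erase K, (B:ℤ) ^ (k:ℕ) ≤ ∑ j ∈ Finset.range (K:ℕ), (B:ℤ)^j := by
      have hsub : (S.erase K).image (fun k : Fin q => (k:ℕ)) ⊆ Finset.range (K:ℕ) := by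
        intro j hj
        obtain ⟨k, hk, rfl⟩ := Finset.mem_image.mp hj
        obtain ⟨hne, hkS⟩ := Finset.mem_erase.mp hk
        have hkK : k < K := lt_of_le_of_ne (S.le_max' k hkS) hne
        exact Finset.mem_range.mpr hkK
      calc ∑ k ∈ S.erase K, (B:ℤ) ^ (k:ℕ)
          = ∑ j ∈ (S.erase K).image (fun k : Fin q => (k:ℕ)), (B:ℤ) ^ j := by
            rw [Finset.sum_image]
            intro a _ b _ hab
            exact Fin.val_injective hab
        _ ≤ ∑ j ∈ Finset.range (K:ℕ), (B:ℤ)^j :=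
            Finset.sum_le_sum_of_subset_of_nonneg hsub (fun j _ _ => by positivity)
    have hup : |g K| ≤ 2 * ((K:ℕ) : ℤ) * (B:ℤ) ^ (K:ℕ) := by
      have hBK : (B:ℤ) * (2 * (B:ℤ)^((K:ℕ) - 1)) = 2 * (B:ℤ) ^ (K:ℕ) := by
        have : (B:ℤ) * (B:ℤ)^((K:ℕ) - 1) = (B:ℤ) ^ (K:ℕ) := by
          rw [← pow_succ']; congr 1; omega
        linarith [this]
      calc |g K| = |∑ k ∈ S.erase K, g k| := by rw [hgK, abs_neg]
        _ ≤ ∑ k ∈ S.erase K, |g k| := Finset.abs_sum_le_sum_abs _ _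
        _ ≤ ∑ k ∈ S.erase K, (B : ℤ) * (K:ℕ) * (B:ℤ) ^ (k:ℕ) :=
            Finset.sum_le_sum hterm
        _ = (B : ℤ) * (K:ℕ) * ∑ k ∈ S.erase K, (B:ℤ) ^ (k:ℕ) := by
            rw [Finset.mul_sum]
        _ ≤ (B : ℤ) * (K:ℕ) * (2 * (B:ℤ)^((K:ℕ) - 1)) := by
            have h0 : (0:ℤ) ≤ (B : ℤ) * (K:ℕ) := by positivity
            exact mul_le_mul_of_nonneg_left (le_trans himg hgeoZ) h0
        _ = ((K:ℕ) : ℤ) * ((B:ℤ) * (2 * (B:ℤ)^((K:ℕ) - 1))) := by ring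
        _ = 2 * ((K:ℕ) : ℤ) * (B:ℤ) ^ (K:ℕ) := by rw [hBK]; ring
    have hfin : 2 * (((K:ℕ) : ℤ) + 1) * (B:ℤ) ^ (K:ℕ) ≤ 2 * ((K:ℕ) : ℤ) * (B:ℤ) ^ (K:ℕ) :=
      le_trans hlow hup
    nlinarith [hpowpos]
end

section
/- For every x ∈ {0,1}^n, the identity x^T · Ŝ - T̂ = ∑_{k=1}^q k · (m·n)^{k-1} · (∑_{i=1}^n x_i · α_{ik} - (1/2) · ∑_{i=1}^n α_{ik}) holds, and moreover each term in parentheses satisfies -(m·n)/2 ≤ ∑_{i=1}^n x_i · α_{ik} - (1/2) · ∑_{i=1}^n α_{ik} ≤ (m·n)/2. -/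
/-- Over the rationals, for every binary `x ∈ {0,1}^n`,
`xᵀ·Ŝ - T̂ = ∑_{k=1}^q k · (m·n)^(k-1) · (∑ i, x i · α i k - (1/2) · ∑ i, α i k)`,
and each term in parentheses lies in `[-(m·n)/2, (m·n)/2]`. -/
theorem stmt_12
    (n m q : ℕ) (hn : 1 ≤ n) (hm : 1 ≤ m)
    (s : Fin n → ℕ) (hspos : ∀ i, 0 < s i) (hsm : ∀ i, s i ≤ 2 ^ m)
    (p : Fin q → ℕ) (hp : ∀ k, (p k).Prime) (hmono : StrictMono p)
    (hdiv : ∀ r : ℕ, r.Prime → (r ∣ ∏ i, s i ↔ ∃ k, p k = r))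
    (α : Fin n → Fin q → ℕ) (hα : ∀ i, s i = ∏ k, p k ^ α i k)
    (shat : Fin n → ℚ)
    (hshat : ∀ i, shat i
      = ∑ k : Fin q, (α i k : ℚ) * ((k : ℕ) + 1) * ((n : ℚ) * m) ^ (k : ℕ))
    (That : ℚ)
    (hThat : That
      = ∑ k : Fin q, ((1 / 2) * ∑ i, (α i k : ℚ)) * ((k : ℕ) + 1) * ((n : ℚ) * m) ^ (k : ℕ))
    (x : Fin n → ℚ) (hx : ∀ i, x i = 0 ∨ x i = 1) :
    (∑ i, x i * shat i) - That
        = ∑ k : Fin q, ((k : ℕ) + 1 : ℚ) * ((m : ℚ) * n) ^ (k : ℕ)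
            * ((∑ i, x i * (α i k : ℚ)) - (1 / 2) * ∑ i, (α i k : ℚ)) ∧
    ∀ k : Fin q,
      -((m : ℚ) * n) / 2 ≤ (∑ i, x i * (α i k : ℚ)) - (1 / 2) * ∑ i, (α i k : ℚ) ∧
      (∑ i, x i * (α i k : ℚ)) - (1 / 2) * ∑ i, (α i k : ℚ) ≤ ((m : ℚ) * n) / 2 := by
  have hαm : ∀ i k, (α i k : ℚ) ≤ m := by
    intro i k
    have h2 : 2 ^ α i k ≤ p k ^ α i k :=
      Nat.pow_le_pow_left (hp k).two_le _
    have hle : p k ^ α i k ≤ s i := by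
      rw [hα i]
      exact Finset.single_le_prod' (fun j _ => Nat.one_le_pow _ _ (hp j).pos)
        (Finset.mem_univ k)
    have : 2 ^ α i k ≤ 2 ^ m := le_trans (le_trans h2 hle) (hsm i)
    have := Nat.pow_le_pow_iff_right (le_refl 2) |>.mp this
    exact_mod_cast this
  constructor
  · have h1 : ∑ i, x i * shat i
        = ∑ k : Fin q, ∑ i, x i * ((α i k : ℚ) * ((k : ℕ) + 1) * ((n : ℚ) * m) ^ (k : ℕ)) := by
      rw [Finset.sum_comm]
      exact Finset.sum_congr rfl fun i _ => by rw [hshat i, Finset.mul_sum]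
    rw [hThat, h1, ← Finset.sum_sub_distrib]
    refine Finset.sum_congr rfl fun k _ => ?_
    rw [mul_sub, Finset.mul_sum, Finset.mul_sum, Finset.mul_sum, Finset.sum_mul, Finset.sum_mul,
      ← Finset.sum_sub_distrib, ← Finset.sum_sub_distrib]
    refine Finset.sum_congr rfl fun i _ => ?_
    ring
  · intro k
    have h0 : (0:ℚ) ≤ ∑ i, x i * (α i k : ℚ) :=
      Finset.sum_nonneg fun i _ => by
        rcases hx i with h | h <;> simp [h] <;> positivity
    have hle : ∑ i, x i * (α i k : ℚ) ≤ ∑ i, (α i k : ℚ) :=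
      Finset.sum_le_sum fun i _ => by
        rcases hx i with h | h <;> simp [h] <;> positivity
    have hT : ∑ i, (α i k : ℚ) ≤ (m : ℚ) * n := by
      calc ∑ i, (α i k : ℚ) ≤ ∑ _i : Fin n, (m : ℚ) :=
            Finset.sum_le_sum fun i _ => hαm i k
        _ = (m : ℚ) * n := by simp [mul_comm]
    have hT0 : (0:ℚ) ≤ ∑ i, (α i k : ℚ) :=
      Finset.sum_nonneg fun i _ => by positivity
    constructor <;> nlinarith
end

section
/- If there exists a vector x ∈ ℚ^n with x^T · S_M = 0_{1×q} and x_i ≠ 0 for all i ∈ {1,...,n}, then the relaxed Product Partition Problem has a solution: there exist positive integers k_1, ..., k_n and a subset C ⊆ {1,...,n} such that ∏_{i∈C} s_i^{k_i} = ∏_{i∈{1,...,n}\C} s_i^{k_i}. -/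
/-- If there is `x ∈ ℚ^n` with `xᵀ · S_M = 0` and `x i ≠ 0` for all `i`, then the relaxed
Product Partition Problem has a solution: there exist positive integers `k 1, ..., k n`
and a subset `C ⊆ {1,...,n}` with `∏_{i∈C} (s i)^(k i) = ∏_{i∉C} (s i)^(k i)`. -/
theorem stmt_13
    (n m q : ℕ) (hn : 1 ≤ n) (hm : 1 ≤ m)
    (s : Fin n → ℕ) (hspos : ∀ i, 0 < s i) (hsm : ∀ i, s i ≤ 2 ^ m)
    (p : Fin q → ℕ) (hp : ∀ k, (p k).Prime) (hmono : StrictMono p)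
    (hdiv : ∀ r : ℕ, r.Prime → (r ∣ ∏ i, s i ↔ ∃ k, p k = r))
    (α : Fin n → Fin q → ℕ) (hα : ∀ i, s i = ∏ k, p k ^ α i k)
    (x : Fin n → ℚ) (hx0 : ∀ i, x i ≠ 0)
    (hxS : ∀ k : Fin q, ∑ i, x i * (α i k : ℚ) = 0) :
    ∃ K : Fin n → ℕ, (∀ i, 0 < K i) ∧
      ∃ C : Finset (Fin n), ∏ i ∈ C, s i ^ K i = ∏ i ∈ Cᶜ, s i ^ K i := by
  classical
  set N : ℕ := ∏ j, (x j).den with hN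
  set y : Fin n → ℤ :=
    fun i => (x i).num * ∏ j ∈ Finset.univ.erase i, ((x j).den : ℤ) with hy
  have hyx : ∀ i, (y i : ℚ) = x i * N := by
    intro i
    have hd : ((x i).den : ℚ) ≠ 0 := Nat.cast_ne_zero.mpr (x i).den_nz
    have hNq : (N : ℚ) = ((x i).den : ℚ) * ∏ j ∈ Finset.univ.erase i, ((x j).den : ℚ) := by
      rw [hN]
      push_cast
      rw [← Finset.mul_prod_erase _ _ (Finset.mem_univ i)]
    have hxi : x i = ((x i).num : ℚ) / ((x i).den : ℚ) := (Rat.num_div_den (x i)).symm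
    rw [hy]
    push_cast
    rw [hNq, show x i * (((x i).den : ℚ) * ∏ j ∈ Finset.univ.erase i, ((x j).den : ℚ))
        = (x i * ((x i).den : ℚ)) * ∏ j ∈ Finset.univ.erase i, ((x j).den : ℚ) from by ring,
      Rat.mul_den_eq_num]
  have hy0 : ∀ i, y i ≠ 0 := by
    intro i
    apply mul_ne_zero
    · exact Rat.num_ne_zero.mpr (hx0 i)
    · apply Finset.prod_ne_zero_iff.mpr
      intro j _
      exact_mod_cast (x j).den_nz
  have hsum : ∀ k : Fin q, ∑ i, y i * (α i k : ℤ) = 0 := by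
    intro k
    have : ((∑ i, y i * (α i k : ℤ) : ℤ) : ℚ) = 0 := by
      push_cast
      calc ∑ i, (y i : ℚ) * (α i k : ℚ)
          = ∑ i, (x i * (α i k : ℚ)) * N := by
            refine Finset.sum_congr rfl fun i _ => ?_
            rw [hyx i]; ring
        _ = (∑ i, x i * (α i k : ℚ)) * N := by rw [Finset.sum_mul]
        _ = 0 := by rw [hxS k, zero_mul]
    exact_mod_cast this
  set K : Fin n → ℕ := fun i => (y i).natAbs with hK
  set C : Finset (Fin n) := Finset.univ.filter (fun i => 0 < y i) with hC
  have hKpos : ∀ i, 0 < K i := fun i => Int.natAbs_pos.mpr (hy0 i)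
  have hKC : ∀ i ∈ C, (K i : ℤ) = y i := by
    intro i hi
    rw [hC] at hi
    exact Int.natAbs_of_nonneg (le_of_lt (Finset.mem_filter.mp hi).2)
  have hKCc : ∀ i ∈ Cᶜ, (K i : ℤ) = -y i := by
    intro i hi
    rw [Finset.mem_compl, hC, Finset.mem_filter] at hi
    have : y i < 0 := by
      rcases lt_trichotomy (y i) 0 with h | h | h
      · exact h
      · exact absurd h (hy0 i)
      · exact absurd ⟨Finset.mem_univ i, h⟩ hi
    calc ((K i : ℕ) : ℤ) = (((-y i).natAbs : ℕ) : ℤ) := by rw [hK]; simp [Int.natAbs_neg]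
      _ = -y i := Int.natAbs_of_nonneg (by linarith)
  have hexp : ∀ k : Fin q, ∑ i ∈ C, α i k * K i = ∑ i ∈ Cᶜ, α i k * K i := by
    intro k
    have hz : ((∑ i ∈ C, α i k * K i : ℕ) : ℤ) = ((∑ i ∈ Cᶜ, α i k * K i : ℕ) : ℤ) := by
      push_cast
      have hsplit := Finset.sum_add_sum_compl C (fun i => y i * (α i k : ℤ))
      rw [hsum k] at hsplit
      have h1 : ∑ i ∈ C, (α i k : ℤ) * (K i : ℤ) = ∑ i ∈ C, y i * (α i k : ℤ) := by
        refine Finset.sum_congr rfl fun i hi => ?_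
        rw [hKC i hi]; ring
      have h2 : ∑ i ∈ Cᶜ, (α i k : ℤ) * (K i : ℤ) = -∑ i ∈ Cᶜ, y i * (α i k : ℤ) := by
        rw [← Finset.sum_neg_distrib]
        refine Finset.sum_congr rfl fun i hi => ?_
        rw [hKCc i hi]; ring
      rw [h1, h2]
      linarith
    exact_mod_cast hz
  refine ⟨K, hKpos, C, ?_⟩
  have key : ∀ (T : Finset (Fin n)), ∏ i ∈ T, s i ^ K i = ∏ k, p k ^ (∑ i ∈ T, α i k * K i) := by
    intro T
    calc ∏ i ∈ T, s i ^ K i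
        = ∏ i ∈ T, ∏ k, p k ^ (α i k * K i) := by
          refine Finset.prod_congr rfl fun i _ => ?_
          rw [hα i, ← Finset.prod_pow]
          refine Finset.prod_congr rfl fun k _ => ?_
          rw [← pow_mul]
      _ = ∏ k, ∏ i ∈ T, p k ^ (α i k * K i) := Finset.prod_comm
      _ = ∏ k, p k ^ (∑ i ∈ T, α i k * K i) := by
          refine Finset.prod_congr rfl fun k _ => ?_
          rw [Finset.prod_pow_eq_pow_sum]
  rw [key C, key Cᶜ]
  exact Finset.prod_congr rfl fun k _ => by rw [hexp k]
end
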